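/- arXiv:2102.03144 — 5 statements merged into one kernel-verified Lean document; each statement's English description precedes it below -/
import Mathlib

section
/- Let $n,m$ be natural numbers with $1 \le m \le n/3$. Then any tree $T$ on $n$ vertices contains two edge-disjoint subtrees $T_1, T_2 \subseteq T$ such that $E(T_1) \cup E(T_2) = E(T)$ and $m \le |V(T_2)| \le 3m$. -/
/-!
For adjacent `u, c` of a tree, call `branch u c` the set of vertices whose path to `u` runs through
`c`. Take a smallest branch `branch u c` with at least `m` vertices. The branches `branch c d`,
`d ≠ u`, are then smaller than `m`, and together they have `#(branch u c) - 1 ≥ m - 1` vertices,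
so greedily some of them together with `c` form a set `S` with `m ≤ #S < 2m`. Every edge leaving
`S` leaves at `c`, hence `S` and `{c} ∪ Sᶜ` both induce subtrees; they meet only in `c` and
share out all edges of the tree.
-/

open Finset

theorem Finset.exists_subset_le_sum_le_add {ι : Type*} (s : Finset ι) (f : ι → ℕ) {A B : ℕ}
    (hB : ∀ i ∈ s, f i ≤ B) (hA : A ≤ ∑ i ∈ s, f i) :
    ∃ t ⊆ s, A ≤ ∑ i ∈ t, f i ∧ ∑ i ∈ t, f i ≤ A + B := by
  classical
  induction s using Finset.induction_on with
  | empty => exact ⟨∅, subset_refl _, by simpa using hA, by simp⟩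
  | insert a s ha ih =>
    rw [sum_insert ha] at hA
    by_cases hs : A ≤ ∑ i ∈ s, f i
    · obtain ⟨t, hts, ht⟩ := ih (fun i hi => hB i (mem_insert_of_mem hi)) hs
      exact ⟨t, hts.trans (subset_insert a s), ht⟩
    · refine ⟨insert a s, subset_refl _, by rwa [sum_insert ha], ?_⟩
      rw [sum_insert ha]
      have := hB a (mem_insert_self a s)
      omega

namespace SimpleGraph

variable {V : Type*} {G : SimpleGraph V}

def ExitsThrough (G : SimpleGraph V) (S : Set V) (u : V) : Prop :=
  ∀ ⦃x y⦄, G.Adj x y → x ∈ S → y ∉ S → x = u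

namespace ExitsThrough

variable {S : Set V} {u : V}

theorem insert_compl (hS : G.ExitsThrough S u) : G.ExitsThrough (insert u Sᶜ) u := by
  intro x y hxy hx hy
  simp only [Set.mem_insert_iff, Set.mem_compl_iff, not_or, not_not] at hx hy
  rcases hx with rfl | hx
  · rfl
  · exact absurd (hS hxy.symm hy.2 hx) hy.1

theorem support_subset_of_isPath (hS : G.ExitsThrough S u) {w : V} {p : G.Walk w u}
    (hp : p.IsPath) (hw : w ∈ S) : ∀ z ∈ p.support, z ∈ S := by
  induction p with
  | nil => simpa using hw
  | @cons w x v hwx q ih =>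
    rw [Walk.cons_isPath_iff] at hp
    have hwv : w ≠ v := by rintro rfl; exact hp.2 q.end_mem_support
    have hx : x ∈ S := by_contra fun hx => hwv (hS hwx hw hx)
    intro z hz
    rcases List.mem_cons.mp (Walk.support_cons _ _ ▸ hz) with rfl | hz
    · exact hw
    · exact ih hS hp.1 hx z hz

theorem connected_induce (hG : G.Connected) (hS : G.ExitsThrough S u) (hu : u ∈ S) :
    (G.induce S).Connected := by
  refine induce_connected_of_patches u hu fun {v} hv => ?_
  obtain ⟨p, hp⟩ := (hG v u).exists_isPath
  exact ⟨{z | z ∈ p.support}, hS.support_subset_of_isPath hp hv, p.end_mem_support,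
    p.start_mem_support, p.connected_induce_support.preconnected _ _⟩

theorem isTree_coe_induce_top (hG : G.IsTree) (hS : G.ExitsThrough S u) (hu : u ∈ S) :
    ((⊤ : G.Subgraph).induce S).coe.IsTree := by
  rw [← induce_eq_coe_induce_top]
  exact ⟨hS.connected_induce hG.connected hu, hG.isAcyclic.induce S⟩

theorem edgeSet_induce_insert_compl_union (hS : G.ExitsThrough S u) :
    ((⊤ : G.Subgraph).induce (insert u Sᶜ)).edgeSet ∪ ((⊤ : G.Subgraph).induce S).edgeSet =
      G.edgeSet := by
  ext e
  induction e using Sym2.ind with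
  | _ a b =>
    simp only [Set.mem_union, Subgraph.mem_edgeSet, Subgraph.induce_adj, Subgraph.top_adj,
      mem_edgeSet, Set.mem_insert_iff, Set.mem_compl_iff]
    refine ⟨by tauto, fun h => ?_⟩
    by_cases ha : a ∈ S <;> by_cases hb : b ∈ S
    · exact Or.inr ⟨ha, hb, h⟩
    · exact Or.inl ⟨Or.inl (hS h ha hb), Or.inr hb, h⟩
    · exact Or.inl ⟨Or.inr ha, Or.inl (hS h.symm hb ha), h⟩
    · exact Or.inl ⟨Or.inr ha, Or.inr hb, h⟩

end ExitsThrough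

theorem disjoint_edgeSet_induce_insert_compl (S : Set V) (u : V) :
    Disjoint ((⊤ : G.Subgraph).induce (insert u Sᶜ)).edgeSet
      ((⊤ : G.Subgraph).induce S).edgeSet := by
  rw [Set.disjoint_left]
  intro e h₁ h₂
  induction e using Sym2.ind with
  | _ a b =>
    simp only [Subgraph.mem_edgeSet, Subgraph.induce_adj, Subgraph.top_adj,
      Set.mem_insert_iff, Set.mem_compl_iff] at h₁ h₂
    obtain ⟨ha, hb, hab⟩ := h₁
    have ha : a = u := ha.resolve_right (not_not.mpr h₂.1)
    have hb : b = u := hb.resolve_right (not_not.mpr h₂.2.1)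
    exact hab.ne (ha.trans hb.symm)

namespace IsTree

variable (hG : G.IsTree)

open Classical in
noncomputable def path (v w : V) : G.Walk v w := (hG.connected v w).some.bypass

open Classical in
theorem isPath_path (v w : V) : (hG.path v w).IsPath := Walk.bypass_isPath _

variable {hG}

theorem eq_path {v w : V} {p : G.Walk v w} (hp : p.IsPath) : p = hG.path v w :=
  (hG.existsUnique_path v w).unique hp (hG.isPath_path v w)

theorem mem_support_path_of_adj {x y t z : V} (hxy : G.Adj x y)
    (hz : z ∈ (hG.path y t).support) : z = y ∨ z ∈ (hG.path x t).support := by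
  classical
  let p := Walk.cons hxy.symm (hG.path x t)
  rw [← eq_path p.bypass_isPath] at hz
  simpa [p] using p.support_bypass_subset_support hz

variable [Fintype V]

open Classical in
/-- For a neighbour `c` of `u`, the component of `c` once the edge `uc` is removed. -/
noncomputable def branch (hG : G.IsTree) (u c : V) : Finset V :=
  univ.filter fun w => c ∈ (hG.path w u).support

theorem mem_branch {u c w : V} : w ∈ hG.branch u c ↔ c ∈ (hG.path w u).support := by
  simp [branch]

theorem self_mem_branch (u c : V) : c ∈ hG.branch u c :=
  mem_branch.mpr (Walk.start_mem_support _)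

theorem notMem_branch_of_adj {u c : V} (huc : G.Adj u c) : u ∉ hG.branch u c := by
  rw [mem_branch, ← eq_path (Walk.IsPath.nil (u := u)), Walk.support_nil, List.mem_singleton]
  exact huc.ne'

theorem mem_branch_iff_penultimate {u c w : V} (huc : G.Adj u c) :
    w ∈ hG.branch u c ↔ w ≠ u ∧ (hG.path w u).penultimate = c := by
  rw [mem_branch]
  refine ⟨fun h => ⟨?_, (hG.isAcyclic.eq_penultimate_of_adj_end (hG.isPath_path w u)
    huc h).symm⟩, fun ⟨_, h⟩ => h ▸ Walk.getVert_mem_support _ _⟩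
  rintro rfl
  exact notMem_branch_of_adj huc (mem_branch.mpr h)

theorem mem_branch_swap_iff_notMem {u c w : V} (huc : G.Adj u c) :
    w ∈ hG.branch c u ↔ w ∉ hG.branch u c := by
  rw [mem_branch, mem_branch]
  constructor
  · exact fun h => by_contra fun h' => hG.isAcyclic.ne_mem_support_of_support_of_adj_of_isPath
      (hG.isPath_path w u) (hG.isPath_path w c) huc (not_not.mp h') h
  · exact fun h => by_contra fun h' => h <|
      hG.isAcyclic.mem_support_of_ne_mem_support_of_adj_of_isPath
        (hG.isPath_path w u) (hG.isPath_path w c) huc h'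

theorem eq_of_adj_of_mem_branch {u c x y : V} (huc : G.Adj u c) (hxy : G.Adj x y)
    (hx : x ∈ hG.branch u c) (hy : y ∉ hG.branch u c) : y = u := by
  have hx' : u ∉ (hG.path x c).support :=
    mt mem_branch.mpr fun h => (mem_branch_swap_iff_notMem huc).mp h hx
  have hy' : u ∈ (hG.path y c).support := mem_branch.mp ((mem_branch_swap_iff_notMem huc).mpr hy)
  exact ((mem_support_path_of_adj hxy hy').resolve_right hx').symm

variable (hG)

theorem pairwiseDisjoint_branch (u : V) : (G.neighborSet u).PairwiseDisjoint (hG.branch u) := by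
  intro c hc d hd hcd
  rw [Function.onFun, Finset.disjoint_left]
  intro w hwc hwd
  rw [mem_branch_iff_penultimate hc] at hwc
  rw [mem_branch_iff_penultimate hd] at hwd
  exact hcd (hwc.2.symm.trans hwd.2)

theorem card_insert_biUnion_branch [DecidableEq V] {u : V} {s : Finset V}
    (hs : ∀ c ∈ s, G.Adj u c) :
    #(insert u (s.biUnion (hG.branch u))) = ∑ c ∈ s, #(hG.branch u c) + 1 := by
  rw [card_insert_of_notMem, card_biUnion]
  · exact (hG.pairwiseDisjoint_branch u).subset fun c hc => hs c hc
  · simp only [mem_biUnion, not_exists, not_and]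
    exact fun c hc => notMem_branch_of_adj (hs c hc)

theorem insert_biUnion_branch [DecidableEq V] [DecidableRel G.Adj] (u : V) :
    insert u (({c | G.Adj u c} : Finset V).biUnion (hG.branch u)) = univ := by
  refine eq_univ_of_forall fun w => ?_
  rcases eq_or_ne w u with rfl | hwu
  · exact mem_insert_self _ _
  have hnil : ¬(hG.path w u).Nil := Walk.not_nil_of_ne hwu
  have hadj : G.Adj u (hG.path w u).penultimate := (Walk.adj_penultimate hnil).symm
  refine mem_insert_of_mem (mem_biUnion.mpr ⟨_, by simpa using hadj, ?_⟩)
  exact (mem_branch_iff_penultimate hadj).mpr ⟨hwu, rfl⟩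

theorem sum_card_branch [DecidableRel G.Adj] (u : V) :
    ∑ c ∈ {c | G.Adj u c}, #(hG.branch u c) + 1 = Fintype.card V := by
  classical
  rw [← hG.card_insert_biUnion_branch (by simp), insert_biUnion_branch, card_univ]

theorem card_branch_add_card_branch {u c : V} (huc : G.Adj u c) :
    #(hG.branch u c) + #(hG.branch c u) = Fintype.card V := by
  classical
  have : hG.branch c u = (hG.branch u c)ᶜ := by
    ext w
    rw [mem_compl, mem_branch_swap_iff_notMem huc]
  rw [this, card_compl]
  have := card_le_univ (hG.branch u c)
  omega

theorem branch_ssubset_branch {u c d : V} (huc : G.Adj u c) (hcd : G.Adj c d) (hdu : d ≠ u) :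
    hG.branch c d ⊂ hG.branch u c := by
  refine ssubset_iff_of_subset (fun w hw => ?_) |>.mpr
    ⟨c, self_mem_branch u c, notMem_branch_of_adj hcd⟩
  by_contra h
  exact Finset.disjoint_left.mp (hG.pairwiseDisjoint_branch c hcd huc.symm hdu) hw
    ((mem_branch_swap_iff_notMem huc).mpr h)

theorem exitsThrough_insert_biUnion_branch [DecidableEq V] {u : V} {s : Finset V}
    (hs : ∀ c ∈ s, G.Adj u c) :
    G.ExitsThrough ↑(insert u (s.biUnion (hG.branch u))) u := by
  intro x y hxy hx hy
  by_contra hxu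
  simp only [coe_insert, coe_biUnion, Set.mem_insert_iff, Set.mem_iUnion, mem_coe] at hx hy
  obtain ⟨c, hc, hxc⟩ := hx.resolve_left hxu
  have hyc : y ∉ hG.branch u c := fun h => hy (Or.inr ⟨c, hc, h⟩)
  exact hy (Or.inl (eq_of_adj_of_mem_branch (hs c hc) hxy hxc hyc))

theorem exists_adj_le_card_branch_forall_card_branch_lt {m : ℕ} (hm : 1 ≤ m)
    (hn : 2 * m ≤ Fintype.card V) :
    ∃ u c, G.Adj u c ∧ m ≤ #(hG.branch u c) ∧
      ∀ d, G.Adj c d → d ≠ u → #(hG.branch c d) < m := by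
  classical
  have : Nontrivial V := Fintype.one_lt_card_iff_nontrivial.mp (by omega)
  obtain ⟨a, b, hab⟩ : ∃ a b, G.Adj a b :=
    ⟨_, hG.connected.preconnected.exists_adj_of_nontrivial (Classical.arbitrary V)⟩
  let darts : Finset (V × V) := {p | G.Adj p.1 p.2 ∧ m ≤ #(hG.branch p.1 p.2)}
  have hne : darts.Nonempty := by
    have := hG.card_branch_add_card_branch hab
    by_cases h : m ≤ #(hG.branch a b)
    · exact ⟨(a, b), by simp [darts, hab, h]⟩
    · exact ⟨(b, a), by simp [darts, hab.symm]; omega⟩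
  obtain ⟨⟨u, c⟩, huc, hmin⟩ := darts.exists_min_image (fun p => #(hG.branch p.1 p.2)) hne
  simp only [darts, mem_filter, mem_univ, true_and] at huc hmin
  refine ⟨u, c, huc.1, huc.2, fun d hcd hdu => ?_⟩
  by_contra! h
  have := card_lt_card (hG.branch_ssubset_branch huc.1 hcd hdu)
  have : #(hG.branch u c) ≤ #(hG.branch c d) := hmin (c, d) ⟨hcd, h⟩
  omega

end IsTree

theorem IsTree.exists_exitsThrough_le_card_lt [Fintype V] (hG : G.IsTree) {m : ℕ} (hm : 1 ≤ m)
    (hn : 2 * m ≤ Fintype.card V) :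
    ∃ (S : Finset V) (u : V), u ∈ S ∧ G.ExitsThrough ↑S u ∧ m ≤ #S ∧ #S < 2 * m := by
  classical
  obtain ⟨u, c, huc, hmc, hsmall⟩ := hG.exists_adj_le_card_branch_forall_card_branch_lt hm hn
  set N : Finset V := ({d | G.Adj c d} : Finset V).erase u with hN_def
  have hN : ∀ d ∈ N, G.Adj c d := fun d hd => by simpa using (mem_erase.mp hd).2
  have hsumN : ∑ d ∈ N, #(hG.branch c d) + 1 = #(hG.branch u c) := by
    have hsum : ∑ d ∈ N, #(hG.branch c d) + #(hG.branch c u) + 1 = Fintype.card V := by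
      rw [hN_def, sum_erase_add _ _ (by simpa using huc.symm)]
      exact hG.sum_card_branch c
    have := hG.card_branch_add_card_branch huc
    omega
  obtain ⟨D, hDN, hD₁, hD₂⟩ := N.exists_subset_le_sum_le_add (fun d => #(hG.branch c d))
    (B := m - 1) (A := m - 1)
    (fun d hd => Nat.le_sub_one_of_lt (hsmall d (hN d hd) (mem_erase.mp hd).1)) (by omega)
  have hD : ∀ d ∈ D, G.Adj c d := fun d hd => hN d (hDN hd)
  refine ⟨_, c, mem_insert_self _ _, hG.exitsThrough_insert_biUnion_branch hD, ?_⟩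
  rw [hG.card_insert_biUnion_branch hD]
  omega

end SimpleGraph

/-- Any tree on `n` vertices, with `1 ≤ m ≤ n/3`, contains two edge-disjoint subtrees
`T₁, T₂` whose edges together are all edges of `T`, with `m ≤ |T₂| ≤ 3m`. -/
theorem stmt0 {V : Type*} [Fintype V] (n m : ℕ) (hm : 1 ≤ m) (hmn : 3 * m ≤ n)
    (G : SimpleGraph V) (hG : G.IsTree) (hcard : Fintype.card V = n) :
    ∃ T1 T2 : G.Subgraph, T1.coe.IsTree ∧ T2.coe.IsTree ∧
      Disjoint T1.edgeSet T2.edgeSet ∧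
      T1.edgeSet ∪ T2.edgeSet = G.edgeSet ∧
      m ≤ T2.verts.ncard ∧ T2.verts.ncard ≤ 3 * m := by
  obtain ⟨S, u, hu, hS, hmS, hSm⟩ := hG.exists_exitsThrough_le_card_lt hm (by omega)
  refine ⟨(⊤ : G.Subgraph).induce (insert u (↑S)ᶜ), (⊤ : G.Subgraph).induce ↑S,
    hS.insert_compl.isTree_coe_induce_top hG (Set.mem_insert u _),
    hS.isTree_coe_induce_top hG hu, SimpleGraph.disjoint_edgeSet_induce_insert_compl _ _,
    hS.edgeSet_induce_insert_compl_union, ?_, ?_⟩ <;>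
  rw [SimpleGraph.Subgraph.induce_verts, Set.ncard_coe_finset] <;> omega
end

section
/- Let $T$ be a finite tree with at most $t$ leaves, where $t \ge 2$, and let $m \ge 2$. Then there exists $s \ge 0$ and vertex-disjoint bare paths $P_1, \dots, P_s$ in $T$, each of length $m$, such that removing the internal vertices of all these paths leaves at most $6mt + 2|V(T)|/(m+1)$ vertices. -/
/-!
Root the tree at any vertex `r`. Every vertex `v` of degree 2 has a neighbour `f v` farther
from `r`, and `f` is injective on such vertices because a vertex has only one neighbour closer
to `r`; the bare paths are read off the `f`-orbits. Repeatedly take a remaining vertex `x` of minimal depth and remove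
`x, f x, …, f^[k] x`, where either `k = m` and `x, …, f^[m-1] x` have degree 2 (a bare path of
length `m`), or `k ≤ m` and `f^[k] x` is the first vertex of degree `≠ 2`. Each removal costs
at most `m + 1` vertices and is paid for by a bare path or by a vertex of degree `≠ 2`, so
`|T| ≤ (m + 1) (s + b)` for `s` bare paths and `b` vertices of degree `≠ 2`. The handshake
lemma gives `b ≤ 2t - 2`, and the bound is arithmetic.
-/

open Finset

def orbitSegment {α : Type*} [DecidableEq α] (f : α → α) (x : α) (k : ℕ) : Finset α :=
  (range (k + 1)).image (f^[·] x)

section OrbitSegments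

variable {α : Type*} {D : Set α} {f : α → α} {h : α → ℕ}

lemma mem_orbitSegment [DecidableEq α] {x y : α} {k : ℕ} :
    y ∈ orbitSegment f x k ↔ ∃ i ≤ k, f^[i] x = y := by
  simp [orbitSegment]

lemma apply_iterate_eq_add (hh : ∀ x ∈ D, h (f x) = h x + 1) {x : α} {k : ℕ}
    (hx : ∀ j < k, f^[j] x ∈ D) : h (f^[k] x) = h x + k := by
  induction k with
  | zero => rfl
  | succ k ih =>
    rw [Function.iterate_succ_apply', hh _ (hx k k.lt_succ_self),
      ih fun j hj => hx j (by omega), add_assoc]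

lemma injOn_iterate (hh : ∀ x ∈ D, h (f x) = h x + 1) {x : α} {k : ℕ}
    (hx : ∀ j < k, f^[j] x ∈ D) : Set.InjOn (f^[·] x) (Set.Iic k) := by
  intro i hi j hj hij
  rw [Set.mem_Iic] at hi hj
  have hi' := apply_iterate_eq_add hh (k := i) fun l hl => hx l (by omega)
  have hj' := apply_iterate_eq_add hh (k := j) fun l hl => hx l (by omega)
  simp only at hij
  rw [hij] at hi'
  omega

lemma card_orbitSegment [DecidableEq α] (hh : ∀ x ∈ D, h (f x) = h x + 1) {x : α} {k : ℕ}
    (hx : ∀ j < k, f^[j] x ∈ D) : #(orbitSegment f x k) = k + 1 := by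
  rw [orbitSegment, card_image_of_injOn, card_range]
  exact (injOn_iterate hh hx).mono fun i hi => Nat.lt_succ_iff.1 (mem_range.1 hi)

lemma iterate_mem_of_mapsTo {s : Set α} (hs : Set.MapsTo f (s ∩ D) s) {x : α} (hxs : x ∈ s)
    {k : ℕ} (hx : ∀ j < k, f^[j] x ∈ D) : f^[k] x ∈ s := by
  induction k with
  | zero => exact hxs
  | succ k ih =>
    rw [Function.iterate_succ_apply']
    exact hs ⟨ih fun j hj => hx j (by omega), hx k k.lt_succ_self⟩

lemma orbitSegment_subset [DecidableEq α] {s : Finset α} (hs : Set.MapsTo f (↑s ∩ D) ↑s)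
    {x : α} (hxs : x ∈ s) {k : ℕ} (hx : ∀ j < k, f^[j] x ∈ D) : orbitSegment f x k ⊆ s := by
  intro y hy
  obtain ⟨i, hik, rfl⟩ := mem_orbitSegment.1 hy
  exact iterate_mem_of_mapsTo hs hxs fun j hj => hx j (by omega)

/-- A point of `s` mapped into the removed segment would lie below its start, or on it by
injectivity of `f`. -/
lemma mapsTo_sdiff_orbitSegment [DecidableEq α] (hf : D.InjOn f)
    (hh : ∀ x ∈ D, h (f x) = h x + 1) {s : Finset α} (hs : Set.MapsTo f (↑s ∩ D) ↑s) {x : α}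
    (hmin : ∀ y ∈ s, h x ≤ h y) {k : ℕ} (hx : ∀ j < k, f^[j] x ∈ D) :
    Set.MapsTo f (↑(s \ orbitSegment f x k) ∩ D) ↑(s \ orbitSegment f x k) := by
  rintro y ⟨hy, hyD⟩
  simp only [coe_sdiff, Set.mem_sdiff, mem_coe, mem_orbitSegment] at hy ⊢
  refine ⟨hs ⟨hy.1, hyD⟩, ?_⟩
  rintro ⟨_ | i, hik, hi⟩
  · have hfy := hh y hyD
    simp only [Function.iterate_zero, id_eq] at hi
    have := hmin y hy.1
    rw [← hi] at hfy
    omega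
  · rw [Function.iterate_succ_apply'] at hi
    exact hy.2 ⟨i, by omega, hf (hx i (by omega)) hyD hi⟩

lemma exists_le_forall_iterate_mem (D : Set α) (f : α → α) (x : α) (m : ℕ) :
    ∃ k ≤ m, (∀ j < k, f^[j] x ∈ D) ∧ (f^[k] x ∈ D → k = m) := by
  classical
  have hex : ∃ k, k = m ∨ f^[k] x ∉ D := ⟨m, Or.inl rfl⟩
  refine ⟨Nat.find hex, Nat.find_min' hex (Or.inl rfl), fun j hj => ?_,
    fun hk => (Nat.find_spec hex).resolve_right (not_not.2 hk)⟩
  exact not_not.1 (not_or.1 (Nat.find_min hex hj)).2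

theorem exists_pairwiseDisjoint_orbitSegments [DecidableEq α] [DecidablePred (· ∈ D)]
    (hf : D.InjOn f) (hh : ∀ x ∈ D, h (f x) = h x + 1) (m : ℕ) (s : Finset α)
    (hs : Set.MapsTo f (↑s ∩ D) ↑s) :
    ∃ P ⊆ s, (∀ p ∈ P, ∀ i < m, f^[i] p ∈ D) ∧
      (P : Set α).PairwiseDisjoint (orbitSegment f · m) ∧
      #s ≤ (m + 1) * (#P + #{x ∈ s | x ∉ D}) := by
  induction s using Finset.strongInduction with
  | H s ih =>
  rcases s.eq_empty_or_nonempty with rfl | hne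
  · exact ⟨∅, by simp⟩
  obtain ⟨x, hxs, hmin⟩ := s.exists_min_image h hne
  obtain ⟨k, hkm, hx, hstop⟩ := exists_le_forall_iterate_mem D f x m
  set R := orbitSegment f x k
  have hRs : R ⊆ s := orbitSegment_subset hs hxs hx
  have hxR : x ∈ R := mem_orbitSegment.2 ⟨0, k.zero_le, rfl⟩
  have hs' := mapsTo_sdiff_orbitSegment hf hh hs hmin hx
  obtain ⟨P, hPs, hPD, hPdisj, hcard⟩ := ih (s \ R) (sdiff_ssubset hRs ⟨x, hxR⟩) hs'
  have hsR : #s = #(s \ R) + (k + 1) := by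
    rw [card_sdiff_of_subset hRs, ← card_orbitSegment hh hx,
      Nat.sub_add_cancel (card_le_card hRs)]
  have hbad : #{y ∈ s \ R | y ∉ D} ≤ #{y ∈ s | y ∉ D} :=
    card_le_card (filter_subset_filter _ sdiff_subset)
  by_cases hk : f^[k] x ∈ D
  · obtain rfl := hstop hk
    have hxP : x ∉ P := fun hxP => (mem_sdiff.1 (hPs hxP)).2 hxR
    refine ⟨insert x P, insert_subset hxs (hPs.trans sdiff_subset), ?_, ?_, ?_⟩
    · simpa only [forall_mem_insert] using ⟨hx, hPD⟩
    · rw [coe_insert]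
      exact hPdisj.insert fun p hp _ =>
        disjoint_of_subset_right (orbitSegment_subset hs' (hPs hp) (hPD p hp)) disjoint_sdiff
    · rw [card_insert_of_notMem hxP]
      nlinarith
  · have hlt : #{y ∈ s \ R | y ∉ D} < #{y ∈ s | y ∉ D} := by
      refine card_lt_card ((ssubset_iff_of_subset (filter_subset_filter _ sdiff_subset)).2
        ⟨f^[k] x, ?_, ?_⟩)
      · exact mem_filter.2 ⟨hRs (mem_orbitSegment.2 ⟨k, le_rfl, rfl⟩), hk⟩
      · exact fun h' => (mem_sdiff.1 (mem_filter.1 h').1).2 (mem_orbitSegment.2 ⟨k, le_rfl, rfl⟩)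
    refine ⟨P, hPs.trans sdiff_subset, hPD, hPdisj, ?_⟩
    nlinarith

end OrbitSegments

namespace SimpleGraph

variable {V : Type*} {G T : SimpleGraph V}

lemma exists_walk_support_eq_iterate {D : Set V} {f : V → V} (hadj : ∀ v ∈ D, G.Adj v (f v))
    {x : V} {k : ℕ} (hx : ∀ j < k, f^[j] x ∈ D) :
    ∃ w : G.Walk x (f^[k] x), w.support = (List.range (k + 1)).map (f^[·] x) := by
  induction k generalizing x with
  | zero => exact ⟨.nil, rfl⟩
  | succ k ih =>
    obtain ⟨w, hw⟩ := ih (x := f x) fun j hj => hx (j + 1) (by omega)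
    have hx0 : x ∈ D := hx 0 k.succ_pos
    refine ⟨.cons (hadj x hx0) w, ?_⟩
    change x :: w.support = _
    rw [hw, List.range_succ_eq_map (n := k + 1), List.map_cons, List.map_map]
    rfl

lemma exists_walks_of_pairwiseDisjoint_orbitSegments [DecidableEq V] {D : Set V} {f : V → V}
    {h : V → ℕ} (hadj : ∀ v ∈ D, G.Adj v (f v)) (hh : ∀ v ∈ D, h (f v) = h v + 1) {m : ℕ}
    {P : Finset V} (hPD : ∀ p ∈ P, ∀ i < m, f^[i] p ∈ D)
    (hdisj : (P : Set V).PairwiseDisjoint (orbitSegment f · m)) :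
    ∃ W : Fin #P → (u : V) × (v : V) × G.Walk u v,
      (∀ i, (W i).2.2.IsPath ∧ (W i).2.2.length = m ∧
        ∀ x ∈ (W i).2.2.support, x ≠ (W i).1 → x ≠ (W i).2.1 → x ∈ D) ∧
      (∀ i j, i ≠ j → List.Disjoint (W i).2.2.support (W j).2.2.support) := by
  choose w hw using fun p : P => exists_walk_support_eq_iterate hadj (hPD p p.2)
  let e := P.equivFin.symm
  have mem_support {i : Fin #P} {x : V} :
      x ∈ (w (e i)).support ↔ ∃ j ≤ m, f^[j] (e i) = x := by
    simp only [hw (e i), List.mem_map, List.mem_range, Nat.lt_succ_iff]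
  refine ⟨fun i => ⟨e i, f^[m] (e i), w (e i)⟩, fun i => ⟨?_, ?_, ?_⟩, fun i j hij => ?_⟩
  · refine Walk.IsPath.mk' ?_
    rw [hw (e i)]
    exact List.Nodup.map_on (fun a ha b hb => injOn_iterate hh (hPD _ (e i).2)
      (by simpa [Nat.lt_succ_iff] using ha) (by simpa [Nat.lt_succ_iff] using hb)) List.nodup_range
  · change (w (e i)).length = m
    have := congrArg List.length (hw (e i))
    rw [Walk.length_support, List.length_map, List.length_range] at this
    omega
  · rintro x hx - hxm
    obtain ⟨j, hjm, rfl⟩ := mem_support.1 hx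
    exact hPD _ (e i).2 j (lt_of_le_of_ne hjm fun hj => hxm (by rw [hj]))
  · have hne : (e i : V) ≠ e j := fun h' => hij (e.injective (Subtype.ext h'))
    intro x hxi hxj
    exact Finset.disjoint_left.1 (hdisj (e i).2 (e j).2 hne)
      (mem_orbitSegment.2 (mem_support.1 hxi)) (mem_orbitSegment.2 (mem_support.1 hxj))

lemma IsTree.eq_penultimate_of_dist_add_one (hT : T.IsTree) {r a v : V} {q : T.Walk r v}
    (hq : q.IsPath) (hadj : T.Adj a v) (hd : T.dist r a + 1 = T.dist r v) :
    a = q.penultimate := by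
  classical
  obtain ⟨p, hp, hpl⟩ := hT.connected.exists_path_of_dist r a
  have hv : v ∉ p.support := fun hv => by
    have := T.dist_le (p.takeUntil v hv)
    have := p.length_takeUntil_le_length hv
    omega
  exact hT.isAcyclic.eq_penultimate_of_adj_end hq hadj.symm
    (hT.isAcyclic.mem_support_of_ne_mem_support_of_adj_of_isPath hq hp hadj.symm hv)

lemma IsTree.eq_of_adj_of_dist_add_one (hT : T.IsTree) {r a b v : V} (ha : T.Adj a v)
    (hb : T.Adj b v) (hda : T.dist r a + 1 = T.dist r v) (hdb : T.dist r b + 1 = T.dist r v) :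
    a = b := by
  obtain ⟨q, hq, -⟩ := hT.connected.exists_path_of_dist r v
  rw [hT.eq_penultimate_of_dist_add_one hq ha hda, hT.eq_penultimate_of_dist_add_one hq hb hdb]

lemma IsTree.exists_adj_dist_eq_add_one (hT : T.IsTree) (r : V) {v : V}
    [Fintype (T.neighborSet v)] (hv : 2 ≤ T.degree v) :
    ∃ w, T.Adj v w ∧ T.dist r w = T.dist r v + 1 := by
  classical
  obtain ⟨a, ha, b, hb, hab⟩ := Finset.one_lt_card.1 <|
    (T.card_neighborFinset_eq_degree v).symm ▸ hv
  rw [mem_neighborFinset] at ha hb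
  by_contra! hno
  have hda := (hT.dist_eq_dist_add_one_of_adj r ha).resolve_right (hno a ha)
  have hdb := (hT.dist_eq_dist_add_one_of_adj r hb).resolve_right (hno b hb)
  exact hab (hT.eq_of_adj_of_dist_add_one ha.symm hb.symm hda.symm hdb.symm)

lemma IsTree.card_degree_ne_two_add_two_le [Fintype V] [DecidableRel T.Adj] [Nontrivial V]
    (hT : T.IsTree) : #{v | T.degree v ≠ 2} + 2 ≤ 2 * #{v | T.degree v = 1} := by
  have hsum : ∑ v, T.degree v + 2 = 2 * Fintype.card V := by
    rw [sum_degrees_eq_twice_card_edges, ← hT.card_edgeFinset]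
    ring
  have hpos : ∀ v, 0 < T.degree v := fun v =>
    hT.connected.preconnected.degree_pos_of_nontrivial v
  have hle : ∑ v, (2 + if T.degree v ≠ 2 then 1 else 0) ≤
      ∑ v, (T.degree v + 2 * if T.degree v = 1 then 1 else 0) :=
    sum_le_sum fun v _ => by have := hpos v; split_ifs <;> omega
  simp only [sum_add_distrib, ← mul_sum, sum_const, ← card_filter, card_univ, smul_eq_mul] at hle
  omega

end SimpleGraph

lemma sub_mul_le_of_le_mul_add {n s b m : ℝ} (hm : 1 ≤ m) (h : n ≤ (m + 1) * (s + b)) :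
    n - s * (m - 1) ≤ 2 * n / (m + 1) + b * (m - 1) := by
  rw [div_add' _ _ _ (by linarith), le_div_iff₀ (by linarith)]
  nlinarith

/-- A tree with at most `t ≥ 2` leaves contains vertex-disjoint bare paths of length `m ≥ 2`
whose internal vertices' removal leaves at most `6mt + 2|T|/(m+1)` vertices. -/
theorem stmt6 {V : Type*} [Fintype V] [DecidableEq V]
    (T : SimpleGraph V) [DecidableRel T.Adj] (hT : T.IsTree)
    (t m : ℕ) (ht : 2 ≤ t) (hm : 2 ≤ m)
    (hleaves : (Finset.univ.filter fun v => T.degree v = 1).card ≤ t) :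
    ∃ (s : ℕ) (P : Fin s → (u : V) × (v : V) × T.Walk u v),
      (∀ i, (P i).2.2.IsPath ∧ (P i).2.2.length = m ∧
        ∀ x ∈ (P i).2.2.support, x ≠ (P i).1 → x ≠ (P i).2.1 → T.degree x = 2) ∧
      (∀ i j, i ≠ j → List.Disjoint (P i).2.2.support (P j).2.2.support) ∧
      (Fintype.card V : ℝ) - s * ((m : ℝ) - 1) ≤
        6 * m * t + 2 * (Fintype.card V : ℝ) / (m + 1) := by
  obtain ⟨r⟩ := hT.connected.nonempty
  let D : Set V := {v | T.degree v = 2}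
  choose! f hf using fun v (hv : v ∈ D) => hT.exists_adj_dist_eq_add_one r hv.ge
  have hinj : D.InjOn f := fun v hv w hw hvw => by
    refine hT.eq_of_adj_of_dist_add_one (hf v hv).1 ?_ (hf v hv).2.symm ?_
    · exact hvw ▸ (hf w hw).1
    · rw [hvw, (hf w hw).2]
  obtain ⟨P, -, hPD, hPdisj, hcard⟩ := exists_pairwiseDisjoint_orbitSegments hinj
    (fun v hv => (hf v hv).2) m Finset.univ fun _ _ => mem_coe.2 (mem_univ _)
  obtain ⟨W, hW, hWdisj⟩ := SimpleGraph.exists_walks_of_pairwiseDisjoint_orbitSegments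
    (fun v hv => (hf v hv).1) (fun v hv => (hf v hv).2) hPD hPdisj
  refine ⟨#P, W, hW, hWdisj, ?_⟩
  have hbad : #{v | T.degree v ≠ 2} ≤ 2 * t := by
    rcases subsingleton_or_nontrivial V with hV | hV
    · have := (card_le_univ ({v | T.degree v ≠ 2} : Finset V)).trans
        (Fintype.card_le_one_iff_subsingleton.2 hV)
      omega
    · have := hT.card_degree_ne_two_add_two_le
      omega
  have hn : (Fintype.card V : ℝ) ≤ (m + 1) * (#P + 2 * t) := by
    rw [← card_univ]
    exact_mod_cast hcard.trans (by gcongr; exact hbad)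
  have hm1 : (1 : ℝ) ≤ m := by exact_mod_cast (by omega : 1 ≤ m)
  calc (Fintype.card V : ℝ) - #P * ((m : ℝ) - 1)
      ≤ 2 * (Fintype.card V : ℝ) / (m + 1) + 2 * t * (m - 1) := sub_mul_le_of_le_mul_add hm1 hn
    _ ≤ 6 * m * t + 2 * (Fintype.card V : ℝ) / (m + 1) := by
      nlinarith [(t.cast_nonneg : (0 : ℝ) ≤ t)]
end

section
/- Let $T$ be a finite tree and suppose a sequence of trees $S_0 = T, S_1, \dots, S_\ell$ is obtained by, at each step $i$, choosing a set $L_i$ of leaves of $S_i$ no two of which share a neighbour in $S_i$, and setting $S_{i+1} = S_i - L_i$ (possibly retaining one distinguished leaf). Then for each vertex $v \in V(S_\ell)$, the component of $T[(V(T) \setminus V(S_\ell)) \cup \{v\}]$ containing $v$ has at most $2^\ell$ vertices. -/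
/-!
After one more round, everything pruned at a survivor `v` was either already pruned at `v`
or, if `v` just lost a leaf neighbour `x`, was pruned at `x`: by independence `v` loses at most
one leaf, and since `T` is a tree and the survivors induce a connected subtree, the only vertex
pruned at a survivor `y` that can be adjacent to another survivor is `y` itself. Hence each round
at most doubles the pruned parts.
-/

namespace SimpleGraph

variable {V : Type*} {G : SimpleGraph V} {S S' : Set V} {u v w : V}

def prunedAt (G : SimpleGraph V) (S : Set V) (v : V) : Set V :=
  Subtype.val '' ((G.induce (Sᶜ ∪ {v})).connectedComponentMk ⟨v, Or.inr rfl⟩).supp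

lemma ncard_prunedAt : (G.prunedAt S v).ncard =
    ((G.induce (Sᶜ ∪ {v})).connectedComponentMk ⟨v, Or.inr rfl⟩).supp.ncard :=
  Set.ncard_image_of_injective _ Subtype.val_injective

lemma self_mem_prunedAt : v ∈ G.prunedAt S v := ⟨_, rfl, rfl⟩

lemma prunedAt_subset : G.prunedAt S v ⊆ Sᶜ ∪ {v} := by
  rintro _ ⟨u, -, rfl⟩
  exact u.2

lemma Reachable.exists_walk_of_induce {s : Set V} {a b : s} (h : (G.induce s).Reachable a b) :
    ∃ p : G.Walk a b, ∀ z ∈ p.support, z ∈ s := by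
  obtain ⟨p⟩ := h
  have hp : ∀ z ∈ (p.map (Embedding.induce s).toHom).support, z ∈ s := by
    simp only [Walk.support_map, List.mem_map]
    rintro _ ⟨z, -, rfl⟩
    exact z.2
  exact ⟨_, hp⟩

lemma exists_walk_of_mem_prunedAt (hu : u ∈ G.prunedAt S v) :
    ∃ p : G.Walk v u, ∀ z ∈ p.support, z ∈ Sᶜ ∪ {v} := by
  obtain ⟨u, hu, rfl⟩ := hu
  exact (ConnectedComponent.exact hu).symm.exists_walk_of_induce

lemma mem_prunedAt_of_adj (hu : u ∈ G.prunedAt S v) (hw : w ∉ S) (huw : G.Adj u w) :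
    w ∈ G.prunedAt S v := by
  obtain ⟨u, hu, rfl⟩ := hu
  refine ⟨⟨w, Or.inl hw⟩, ?_, rfl⟩
  rw [ConnectedComponent.mem_supp_iff] at hu ⊢
  rw [← hu]
  exact ConnectedComponent.sound (show (G.induce _).Adj u ⟨w, _⟩ from huw).reachable.symm

lemma prunedAt_subset_of_forall_adj {C : Set V} (hv : v ∈ C)
    (hC : ∀ u ∈ C, ∀ w ∈ Sᶜ ∪ {v}, G.Adj u w → w ∈ C) : G.prunedAt S v ⊆ C := by
  rintro _ ⟨u, hu, rfl⟩
  by_contra huC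
  obtain ⟨p⟩ := (ConnectedComponent.exact hu).symm
  obtain ⟨d, -, hd, hd'⟩ := p.exists_boundary_dart {a | a.1 ∈ C} hv huC
  exact hd' (hC _ hd _ d.snd.2 d.adj)

/-- The edge `uw` is a bridge, yet `y` is joined to `u` outside `S` and to `w` inside `S`. -/
lemma IsAcyclic.eq_of_mem_prunedAt_of_adj {y : V} (hG : G.IsAcyclic)
    (hS : (G.induce S).Preconnected) (hy : y ∈ S) (hw : w ∈ S) (hwy : w ≠ y)
    (hu : u ∈ G.prunedAt S y) (huw : G.Adj u w) : u = y := by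
  by_contra huy
  have huS : u ∉ S := (prunedAt_subset hu).resolve_right huy
  obtain ⟨p, hp⟩ := exists_walk_of_mem_prunedAt hu
  obtain ⟨q, hq⟩ := (hS ⟨y, hy⟩ ⟨w, hw⟩).exists_walk_of_induce
  have hmem := isBridge_iff_forall_walk_mem_edges.1
    (isAcyclic_iff_forall_adj_isBridge.1 hG huw) (p.reverse.append q)
  rw [Walk.edges_append, Walk.edges_reverse, List.mem_append, List.mem_reverse] at hmem
  rcases hmem with hmem | hmem
  · exact (hp w (p.snd_mem_support_of_mem_edges hmem)).resolve_right hwy hw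
  · exact huS (hq u (q.fst_mem_support_of_mem_edges hmem))

lemma IsAcyclic.prunedAt_subset_biUnion (hG : G.IsAcyclic) (hS : (G.induce S).Preconnected)
    {Y : Set V} (hYS : Y ⊆ S) (hvY : v ∈ Y) (hY : ∀ y ∈ Y, ∀ w ∈ S \ S', G.Adj y w → w ∈ Y) :
    G.prunedAt S' v ⊆ ⋃ y ∈ Y, G.prunedAt S y := by
  refine prunedAt_subset_of_forall_adj (Set.mem_biUnion hvY self_mem_prunedAt) ?_
  intro u hu w hw huw
  obtain ⟨y, hy, hu⟩ := Set.mem_iUnion₂.1 hu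
  by_cases hwS : w ∈ S
  · suffices hwY : w ∈ Y from Set.mem_biUnion hwY self_mem_prunedAt
    rcases hw with hw | rfl
    · by_cases hwy : w = y
      · exact hwy ▸ hy
      obtain rfl := hG.eq_of_mem_prunedAt_of_adj hS (hYS hy) hwS hwy hu huw
      exact hY u hy w ⟨hwS, hw⟩ huw
    · exact hvY
  · exact Set.mem_biUnion hy (mem_prunedAt_of_adj hu hwS huw)

lemma exists_pair_closed_under_adj_diff (hv : v ∈ S)
    (hleaf : ∀ x ∈ S \ S', ∀ y ∈ S, ∀ y' ∈ S, G.Adj x y → G.Adj x y' → y = y')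
    (hindep : ∀ x ∈ S \ S', ∀ x' ∈ S \ S', x ≠ x' → ∀ y ∈ S, ¬(G.Adj x y ∧ G.Adj x' y)) :
    ∃ x ∈ S, ∀ y ∈ ({v, x} : Set V), ∀ w ∈ S \ S', G.Adj y w → w ∈ ({v, x} : Set V) := by
  by_cases h : ∃ x ∈ S \ S', G.Adj v x
  · obtain ⟨x, hx, hvx⟩ := h
    refine ⟨x, hx.1, ?_⟩
    rintro y (rfl | rfl) w hw hyw
    · right
      by_contra hwx
      exact hindep w hw x hx hwx y hv ⟨hyw.symm, hvx.symm⟩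
    · left
      exact hleaf y hx w hw.1 v hv hyw hvx.symm
  · refine ⟨v, hv, ?_⟩
    rintro y (rfl | rfl) w hw hyw <;> exact absurd ⟨w, hw, hyw⟩ h

lemma IsAcyclic.ncard_prunedAt_le_two_mul [Finite V] (hG : G.IsAcyclic)
    (hS : (G.induce S).Preconnected) (hv : v ∈ S)
    (hleaf : ∀ x ∈ S \ S', ∀ y ∈ S, ∀ y' ∈ S, G.Adj x y → G.Adj x y' → y = y')
    (hindep : ∀ x ∈ S \ S', ∀ x' ∈ S \ S', x ≠ x' → ∀ y ∈ S, ¬(G.Adj x y ∧ G.Adj x' y))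
    {k : ℕ} (hk : ∀ y ∈ S, (G.prunedAt S y).ncard ≤ k) :
    (G.prunedAt S' v).ncard ≤ 2 * k := by
  obtain ⟨x, hx, hclosed⟩ := exists_pair_closed_under_adj_diff hv hleaf hindep
  have hsub := hG.prunedAt_subset_biUnion hS (Set.insert_subset hv (Set.singleton_subset_iff.2 hx))
    (Set.mem_insert v {x}) hclosed
  rw [Set.biUnion_pair] at hsub
  calc (G.prunedAt S' v).ncard ≤ (G.prunedAt S v ∪ G.prunedAt S x).ncard :=
        Set.ncard_le_ncard hsub (Set.toFinite _)
    _ ≤ (G.prunedAt S v).ncard + (G.prunedAt S x).ncard := Set.ncard_union_le _ _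
    _ ≤ 2 * k := by linarith [hk v hv, hk x hx]

end SimpleGraph

/-- If a tree `T` is repeatedly pruned, removing at each step a set of leaves no two of which
share a neighbour, then after `ℓ` rounds, for each remaining vertex `v`, the component of
`T[(V(T) \ V(S_ℓ)) ∪ {v}]` containing `v` has at most `2^ℓ` vertices. -/
theorem stmt7 {V : Type*} [Fintype V] [DecidableEq V]
    (T : SimpleGraph V) (hT : T.IsTree) (ℓ : ℕ) (S : ℕ → Finset V)
    (hS0 : S 0 = Finset.univ)
    (hconn : ∀ i ≤ ℓ, (T.induce (↑(S i) : Set V)).Connected)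
    (hsub : ∀ i < ℓ, S (i + 1) ⊆ S i)
    (hleaf : ∀ i < ℓ, ∀ x ∈ S i \ S (i + 1), ∃! y : V, y ∈ S i ∧ T.Adj x y)
    (hindep : ∀ i < ℓ, ∀ x ∈ S i \ S (i + 1), ∀ x' ∈ S i \ S (i + 1), x ≠ x' →
      ∀ y ∈ S i, ¬(T.Adj x y ∧ T.Adj x' y)) :
    ∀ v ∈ S ℓ,
      ((T.induce ((↑(S ℓ) : Set V)ᶜ ∪ {v})).connectedComponentMk
        ⟨v, Set.mem_union_right _ rfl⟩).supp.ncard ≤ 2 ^ ℓ := by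
  induction ℓ with
  | zero =>
    intro v _
    rw [← SimpleGraph.ncard_prunedAt]
    calc (T.prunedAt _ v).ncard ≤ ({v} : Set V).ncard :=
          Set.ncard_le_ncard (by simpa [hS0] using T.prunedAt_subset (S := ↑(S 0)) (v := v))
      _ = 2 ^ 0 := Set.ncard_singleton v
  | succ n ih =>
    have ih := ih (fun i hi => hconn i (by omega)) (fun i hi => hsub i (by omega))
      (fun i hi => hleaf i (by omega)) (fun i hi => hindep i (by omega))
    intro v hv
    rw [← SimpleGraph.ncard_prunedAt, pow_succ, mul_comm]
    refine hT.isAcyclic.ncard_prunedAt_le_two_mul (hconn n (by omega)).preconnected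
      (hsub n (by omega) hv)
      (fun x hx y hy y' hy' hxy hxy' =>
        (hleaf n (by omega) x (Finset.mem_sdiff.2 hx)).unique ⟨hy, hxy⟩ ⟨hy', hxy'⟩)
      (fun x hx x' hx' => hindep n (by omega) x (Finset.mem_sdiff.2 hx) x' (Finset.mem_sdiff.2 hx'))
      fun y hy => ?_
    rw [SimpleGraph.ncard_prunedAt]
    exact ih y hy
end

section
/- Let $\alpha > 0$ and let $D$ be an $n$-vertex digraph with minimum semidegree at least $(1/2+\alpha)n$. Fix $\diamond \in \{+,-\}$ and a vertex $v$. Define a bipartite graph $H$ on vertex classes $V^+ = \{x^+ : x \in V(D)\}$ and $V^- = \{y^- : y \in V(D)\}$ where $x^+ y^-$ is an edge if and only if $|N^-(x) \cap N^\diamond(v) \cap N^+(y)| \ge \alpha^2 n$. Then every vertex of $H$ has degree at least $(1/2+\alpha/2)n$. -/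
open Finset

lemma stmt8_key {V : Type*} [Fintype V] [DecidableEq V] (R : V → V → Prop) [DecidableRel R]
    (n : ℕ) (hn : Fintype.card V = n) (α : ℝ) (hα : 0 < α)
    (hnpos : (0:ℝ) < n)
    (S : Finset V) (hS : 2*α*n ≤ (S.card : ℝ))
    (hdeg : ∀ w : V, (1/2+α)*n ≤ ((Finset.univ.filter fun y => R y w).card : ℝ)) :
    (1/2 + α/2) * n ≤ ((Finset.univ.filter fun y =>
      α^2*n ≤ ((S.filter fun w => R y w).card : ℝ)).card : ℝ) := by
  classical
  set G := Finset.univ.filter (fun y => α^2*n ≤ ((S.filter fun w => R y w).card : ℝ)) with hG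
  set B := Finset.univ.filter (fun y => ¬ (α^2*n ≤ ((S.filter fun w => R y w).card : ℝ))) with hB
  have hcard : ∀ s : Finset V, (s.card : ℝ) ≤ n := by
    intro s
    exact_mod_cast hn ▸ Finset.card_le_univ s
  have hn0 : (0:ℝ) ≤ n := Nat.cast_nonneg n
  have hsum : ∑ w ∈ S, ((Finset.univ.filter fun y => R y w).card : ℝ)
      = ∑ y : V, ((S.filter fun w => R y w).card : ℝ) := by
    push_cast
    simp only [Finset.card_filter]
    push_cast
    exact Finset.sum_comm
  have h1 : (S.card : ℝ) * ((1/2+α)*n) ≤ ∑ w ∈ S, ((Finset.univ.filter fun y => R y w).card : ℝ) := by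
    have := Finset.card_nsmul_le_sum S (fun w => ((Finset.univ.filter fun y => R y w).card : ℝ))
      ((1/2+α)*n) (fun w _ => hdeg w)
    simpa [nsmul_eq_mul] using this
  have hGB : (G.card : ℝ) + B.card = n := by
    have h' := Finset.card_filter_add_card_filter_not (s := (Finset.univ : Finset V))
      (p := fun y => α^2*n ≤ ((S.filter fun w => R y w).card : ℝ))
    rw [Finset.card_univ, hn] at h'
    exact_mod_cast h'
  have h2 : ∑ y : V, ((S.filter fun w => R y w).card : ℝ)
      ≤ (G.card : ℝ) * S.card + ((n : ℝ) - G.card) * (α^2*n) := by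
    rw [← Finset.sum_filter_add_sum_filter_not Finset.univ
      (fun y => α^2*n ≤ ((S.filter fun w => R y w).card : ℝ))]
    have hA : ∑ y ∈ G, ((S.filter fun w => R y w).card : ℝ) ≤ (G.card : ℝ) * S.card := by
      have := Finset.sum_le_card_nsmul G (fun y => ((S.filter fun w => R y w).card : ℝ))
        (S.card : ℝ) (fun y _ => by exact_mod_cast Nat.cast_le.mpr (Finset.card_filter_le S _))
      simpa [nsmul_eq_mul] using this
    have hB' : ∑ y ∈ B, ((S.filter fun w => R y w).card : ℝ) ≤ ((n : ℝ) - G.card) * (α^2*n) := by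
      have hle := Finset.sum_le_card_nsmul B (fun y => ((S.filter fun w => R y w).card : ℝ))
        (α^2*n) (fun y hy => by
          rw [hB, Finset.mem_filter] at hy
          exact (not_le.mp hy.2).le)
      have hBc : (B.card : ℝ) = (n : ℝ) - G.card := by linarith
      rw [← hBc]
      simpa [nsmul_eq_mul] using hle
    exact add_le_add hA hB'
  have hkey : (S.card : ℝ) * ((1/2+α)*n) ≤ (G.card : ℝ) * S.card + ((n : ℝ) - G.card) * (α^2*n) := by
    calc (S.card : ℝ) * ((1/2+α)*n) ≤ _ := h1
    _ = _ := hsum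
    _ ≤ _ := h2
  have hSn : (S.card : ℝ) ≤ n := hcard S
  have hG0 : (0:ℝ) ≤ G.card := Nat.cast_nonneg _
  have hα2 : α ≤ 1/2 := by
    have hpos : 0 < Fintype.card V := by rw [hn]; exact_mod_cast hnpos
    obtain ⟨w0⟩ := Fintype.card_pos_iff.mp hpos
    have hd1 := hdeg w0
    have hd2 := hcard (Finset.univ.filter fun y => R y w0)
    nlinarith
  have hposS : (0:ℝ) ≤ (S.card : ℝ) - α^2*n := by nlinarith
  by_contra h
  push_neg at h
  have hprod : 0 ≤ ((1/2+α/2)*n - G.card) * ((S.card : ℝ) - α^2*n) :=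
    mul_nonneg (by linarith) hposS
  nlinarith [mul_pos (mul_pos hα hnpos) hnpos, mul_le_mul_of_nonneg_right hS hn0,
    mul_pos (mul_pos (mul_pos hα hα) hnpos) hnpos,
    mul_le_mul_of_nonneg_left hS (mul_nonneg hα.le hn0)]

/-- In an `n`-vertex digraph with minimum semidegree at least `(1/2+α)n`, the auxiliary
bipartite graph `H` (where `x⁺y⁻` is an edge iff `|N⁻(x) ∩ N⋄(v) ∩ N⁺(y)| ≥ α²n`) has
minimum degree at least `(1/2+α/2)n`. The sign `⋄` is encoded by a Bool (`true` = `+`). -/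
theorem stmt8 {V : Type*} [Fintype V] [DecidableEq V]
    (D : V → V → Prop) [DecidableRel D]
    (n : ℕ) (hn : Fintype.card V = n) (α : ℝ) (hα : 0 < α)
    (hδ : ∀ v : V,
      (1/2 + α) * n ≤ ((Finset.univ.filter fun w => D v w).card : ℝ) ∧
      (1/2 + α) * n ≤ ((Finset.univ.filter fun w => D w v).card : ℝ))
    (v : V) (d : Bool) :
    (∀ x : V, (1/2 + α/2) * n ≤ ((Finset.univ.filter fun y =>
        α^2 * n ≤ ((Finset.univ.filter fun w =>
          D w x ∧ (if d then D v w else D w v) ∧ D y w).card : ℝ)).card : ℝ)) ∧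
    (∀ y : V, (1/2 + α/2) * n ≤ ((Finset.univ.filter fun x =>
        α^2 * n ≤ ((Finset.univ.filter fun w =>
          D w x ∧ (if d then D v w else D w v) ∧ D y w).card : ℝ)).card : ℝ)) := by
  classical
  have hnpos : (0:ℝ) < n := by
    have : 0 < Fintype.card V := Fintype.card_pos_iff.mpr ⟨v⟩
    rw [hn] at this
    exact_mod_cast this
  have hn0 : (0:ℝ) ≤ n := hnpos.le
  have hcard : ∀ s : Finset V, (s.card : ℝ) ≤ n := fun s => by
    exact_mod_cast hn ▸ Finset.card_le_univ s
  have hvd : (1/2 + α) * n ≤ ((Finset.univ.filter fun w =>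
      (if d then D v w else D w v)).card : ℝ) := by
    cases d
    · simpa using (hδ v).2
    · simpa using (hδ v).1
  -- intersection bound
  have hint : ∀ (p q : V → Prop) [DecidablePred p] [DecidablePred q],
      (1/2 + α) * n ≤ ((Finset.univ.filter p).card : ℝ) →
      (1/2 + α) * n ≤ ((Finset.univ.filter q).card : ℝ) →
      2*α*n ≤ (((Finset.univ.filter fun w => p w ∧ q w)).card : ℝ) := by
    intro p q _ _ hp hq
    have h1 : (Finset.univ.filter p ∪ Finset.univ.filter q).card
        + (Finset.univ.filter p ∩ Finset.univ.filter q).card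
        = (Finset.univ.filter p).card + (Finset.univ.filter q).card :=
      Finset.card_union_add_card_inter _ _
    have h2 : ((Finset.univ.filter p ∪ Finset.univ.filter q).card : ℝ) ≤ n := hcard _
    have h3 : (Finset.univ.filter fun w => p w ∧ q w)
        = Finset.univ.filter p ∩ Finset.univ.filter q := by
      ext w; simp
    rw [h3]
    have h1' : ((Finset.univ.filter p ∪ Finset.univ.filter q).card : ℝ)
        + ((Finset.univ.filter p ∩ Finset.univ.filter q).card : ℝ)
        = ((Finset.univ.filter p).card : ℝ) + ((Finset.univ.filter q).card : ℝ) := by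
      exact_mod_cast h1
    linarith
  constructor
  · intro x
    set S := Finset.univ.filter (fun w => D w x ∧ (if d then D v w else D w v)) with hSdef
    have hS : 2*α*n ≤ (S.card : ℝ) := hint _ _ ((hδ x).2) hvd
    have hset : ∀ y : V, (Finset.univ.filter fun w =>
        D w x ∧ (if d then D v w else D w v) ∧ D y w) = S.filter (fun w => D y w) := by
      intro y
      ext w
      simp only [hSdef, Finset.mem_filter, Finset.mem_univ, true_and]
      tauto
    simp only [hset]
    exact stmt8_key (fun y w => D y w) n hn α hα hnpos S hS (fun w => (hδ w).2)
  · intro y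
    set S := Finset.univ.filter (fun w => (if d then D v w else D w v) ∧ D y w) with hSdef
    have hS : 2*α*n ≤ (S.card : ℝ) := hint _ _ hvd ((hδ y).1)
    have hset : ∀ x : V, (Finset.univ.filter fun w =>
        D w x ∧ (if d then D v w else D w v) ∧ D y w) = S.filter (fun w => D w x) := by
      intro x
      ext w
      simp only [hSdef, Finset.mem_filter, Finset.mem_univ, true_and]
      tauto
    simp only [hset]
    exact stmt8_key (fun x w => D w x) n hn α hα hnpos S hS (fun w => (hδ w).1)
end

section
/- Let $\alpha > 0$ and let $D$ be an $n$-vertex digraph with minimum semidegree at least $(1/2+\alpha)n$, with $n$ sufficiently large in terms of $\alpha$. Fix a vertex $v$ and a sign $\diamond \in \{+,-\}$. Then the vertices of $D$ admit two labelings $V(D) = \{x_1,\dots,x_n\} = \{y_1,\dots,y_n\}$ (i.e., there is a bijection $\sigma$ of $V(D)$) such that for every $i \in [n]$, $|N^-(x_i) \cap N^\diamond(v) \cap N^+(y_i)| \ge \alpha^2 n$. -/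
open Finset

/-- Counting lemma: if each `T y ⊆ A`, `|A| ≥ 2αn`, and `∑_y |T y| ≥ |A|(1/2+α)n`,
then more than `n/2` of the `y` satisfy `|T y| ≥ α²n`. -/
lemma aux_count {V : Type} [Fintype V] (α : ℝ) (n : ℕ) (hα : 0 < α)
    (hn : 1 ≤ n) (hcard : Fintype.card V = n)
    (T : V → Finset V) (A : Finset V)
    (hsub : ∀ y, T y ⊆ A)
    (hA : 2*α*n ≤ (A.card : ℝ))
    (hsum : (A.card : ℝ) * ((1/2+α)*n) ≤ ∑ y : V, ((T y).card : ℝ)) :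
    (n:ℝ)/2 < ((Finset.univ.filter fun y => α^2*n ≤ ((T y).card:ℝ)).card : ℝ) := by
  classical
  set G := Finset.univ.filter fun y => α^2*n ≤ ((T y).card:ℝ) with hG
  set B := Finset.univ.filter fun y => ¬ (α^2*n ≤ ((T y).card:ℝ)) with hB
  have hGB : G.card + B.card = n := by
    rw [hG, hB, Finset.card_filter_add_card_filter_not, Finset.card_univ, hcard]
  have hsplit : (∑ y : V, ((T y).card : ℝ)) = ∑ y ∈ G, ((T y).card : ℝ) + ∑ y ∈ B, ((T y).card : ℝ) := by
    rw [hG, hB, Finset.sum_filter_add_sum_filter_not]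
  have h1 : ∑ y ∈ G, ((T y).card : ℝ) ≤ (G.card : ℝ) * (A.card : ℝ) := by
    rw [← nsmul_eq_mul]
    apply Finset.sum_le_card_nsmul
    intro y _
    exact_mod_cast Finset.card_le_card (hsub y)
  have h2 : ∑ y ∈ B, ((T y).card : ℝ) ≤ (B.card : ℝ) * (α^2*n) := by
    rw [← nsmul_eq_mul]
    apply Finset.sum_le_card_nsmul
    intro y hy
    rw [hB, Finset.mem_filter] at hy
    exact le_of_not_ge hy.2
  have hB' : (B.card : ℝ) = n - G.card := by
    have := hGB
    push_cast [← this]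
    ring
  have hn' : (1:ℝ) ≤ n := by exact_mod_cast hn
  by_contra hcon
  push_neg at hcon
  have key : (A.card : ℝ) * ((1/2+α)*n) ≤ (G.card : ℝ) * A.card + ((n:ℝ) - G.card) * (α^2*n) := by
    rw [← hB']
    linarith [hsplit ▸ hsum]
  have hαn : (0:ℝ) < α * n := by positivity
  nlinarith [hA, hcon, key, mul_pos hα hαn, sq_nonneg (α*(n:ℝ)),
    mul_nonneg (Nat.cast_nonneg G.card) (sub_nonneg.mpr hA)]

lemma double_count {V : Type} [Fintype V] [DecidableEq V] (A : Finset V) (P : V → V → Prop)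
    [DecidableRel P] :
    ∑ y : V, (A.filter fun a => P y a).card = ∑ a ∈ A, (Finset.univ.filter fun y => P y a).card := by
  simp only [Finset.card_filter]
  rw [Finset.sum_comm]

lemma inter_lb {V : Type} [Fintype V] [DecidableEq V] (n : ℕ) (hcard : Fintype.card V = n)
    (p q : V → Prop) [DecidablePred p] [DecidablePred q] :
    ((Finset.univ.filter p).card : ℝ) + ((Finset.univ.filter q).card : ℝ) - n
      ≤ ((Finset.univ.filter fun w => p w ∧ q w).card : ℝ) := by
  have h1 : Finset.univ.filter (fun w => p w ∧ q w) = Finset.univ.filter p ∩ Finset.univ.filter q := by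
    ext w; simp [Finset.mem_filter]
  have h2 := Finset.card_inter_add_card_union (Finset.univ.filter p) (Finset.univ.filter q)
  have h3 : (Finset.univ.filter p ∪ Finset.univ.filter q).card ≤ n := by
    rw [← hcard, ← Finset.card_univ]; exact Finset.card_le_card (Finset.subset_univ _)
  rw [h1]
  have h2' : (Finset.univ.filter p).card + (Finset.univ.filter q).card
      = (Finset.univ.filter p ∩ Finset.univ.filter q).card + (Finset.univ.filter p ∪ Finset.univ.filter q).card := h2.symm
  have hc : ((Finset.univ.filter p).card : ℝ) + ((Finset.univ.filter q).card : ℝ)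
      = ((Finset.univ.filter p ∩ Finset.univ.filter q).card : ℝ)
        + ((Finset.univ.filter p ∪ Finset.univ.filter q).card : ℝ) := by exact_mod_cast h2'
  have h3' : ((Finset.univ.filter p ∪ Finset.univ.filter q).card : ℝ) ≤ n := by exact_mod_cast h3
  linarith

/-- For each `α > 0` and all sufficiently large `n`: in any `n`-vertex digraph with minimum
semidegree at least `(1/2+α)n`, for any vertex `v` and sign `⋄` (a Bool, `true` = `+`), there
is a bijection `σ` of the vertices such that `|N⁻(x) ∩ N⋄(v) ∩ N⁺(σ x)| ≥ α²n` for all `x`. -/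
theorem stmt9 (α : ℝ) (hα : 0 < α) :
    ∃ n₀ : ℕ, ∀ n ≥ n₀, ∀ (V : Type) [Fintype V] [DecidableEq V]
      (D : V → V → Prop) [DecidableRel D], Fintype.card V = n →
      (∀ v : V,
        (1/2 + α) * n ≤ ((Finset.univ.filter fun w => D v w).card : ℝ) ∧
        (1/2 + α) * n ≤ ((Finset.univ.filter fun w => D w v).card : ℝ)) →
      ∀ (v : V) (d : Bool),
        ∃ σ : Equiv.Perm V, ∀ x : V,
          α^2 * n ≤ ((Finset.univ.filter fun w =>
            D w x ∧ (if d then D v w else D w v) ∧ D (σ x) w).card : ℝ) := by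
  classical
  refine ⟨1, ?_⟩
  intro n hn V _ _ D _ hcard hdeg v d
  have hn' : 1 ≤ n := hn
  -- the "middle" neighbourhood predicate
  set Nd : V → Prop := fun w => if d then D v w else D w v with hNdd
  have hNdcard : (1/2+α)*n ≤ ((Finset.univ.filter Nd).card : ℝ) := by
    cases d
    · simpa [hNdd] using (hdeg v).2
    · simpa [hNdd] using (hdeg v).1
  -- the triple-intersection sets
  set T : V → V → Finset V := fun x y =>
    Finset.univ.filter fun w => D w x ∧ Nd w ∧ D y w with hT
  -- Claim 1: for each x, more than n/2 of the y are good
  have claim1 : ∀ x : V,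
      (n:ℝ)/2 < ((Finset.univ.filter fun y => α^2*n ≤ ((T x y).card:ℝ)).card : ℝ) := by
    intro x
    set A : Finset V := Finset.univ.filter fun w => D w x ∧ Nd w with hA
    have hsub : ∀ y, T x y ⊆ A := by
      intro y w hw
      rw [hT] at hw
      rw [hA, Finset.mem_filter] at *
      simp only [Finset.mem_filter, Finset.mem_univ, true_and] at hw ⊢
      exact ⟨hw.1, hw.2.1⟩
    have hAcard : 2*α*n ≤ (A.card : ℝ) := by
      have := inter_lb n hcard (fun w => D w x) Nd
      have hx := (hdeg x).2
      rw [hA]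
      linarith
    have hsum : (A.card : ℝ) * ((1/2+α)*n) ≤ ∑ y : V, ((T x y).card : ℝ) := by
      have heq : ∀ y : V, T x y = A.filter fun w => D y w := by
        intro y
        rw [hT, hA]
        ext w
        simp only [Finset.mem_filter, Finset.mem_univ, true_and]
        tauto
      have hdc := double_count A (fun y a => D y a)
      have hsum2 : ∑ y : V, ((T x y).card : ℝ)
          = ∑ a ∈ A, ((Finset.univ.filter fun y => D y a).card : ℝ) := by
        have hnat : ∑ y : V, (T x y).card
            = ∑ a ∈ A, (Finset.univ.filter fun y => D y a).card := by
          rw [← hdc]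
          exact Finset.sum_congr rfl fun y _ => by rw [heq y]
        exact_mod_cast hnat
      rw [hsum2]
      have hle := Finset.card_nsmul_le_sum A
        (fun a => ((Finset.univ.filter fun y => D y a).card : ℝ)) ((1/2+α)*(n:ℝ))
        (fun a _ => (hdeg a).2)
      rw [nsmul_eq_mul] at hle
      exact hle
    exact aux_count α n hα hn' hcard (T x) A hsub hAcard hsum
  -- Claim 2: for each y, more than n/2 of the x are good
  have claim2 : ∀ y : V,
      (n:ℝ)/2 < ((Finset.univ.filter fun x => α^2*n ≤ ((T x y).card:ℝ)).card : ℝ) := by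
    intro y
    set A : Finset V := Finset.univ.filter fun w => Nd w ∧ D y w with hA
    have hsub : ∀ x, T x y ⊆ A := by
      intro x w hw
      rw [hT] at hw
      rw [hA]
      simp only [Finset.mem_filter, Finset.mem_univ, true_and] at hw ⊢
      exact ⟨hw.2.1, hw.2.2⟩
    have hAcard : 2*α*n ≤ (A.card : ℝ) := by
      have := inter_lb n hcard Nd (fun w => D y w)
      have hy := (hdeg y).1
      rw [hA]
      linarith
    have hsum : (A.card : ℝ) * ((1/2+α)*n) ≤ ∑ x : V, ((T x y).card : ℝ) := by
      have heq : ∀ x : V, T x y = A.filter fun w => D w x := by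
        intro x
        rw [hT, hA]
        ext w
        simp only [Finset.mem_filter, Finset.mem_univ, true_and]
        tauto
      have hdc := double_count A (fun x a => D a x)
      have hsum2 : ∑ x : V, ((T x y).card : ℝ)
          = ∑ a ∈ A, ((Finset.univ.filter fun x => D a x).card : ℝ) := by
        have hnat : ∑ x : V, (T x y).card
            = ∑ a ∈ A, (Finset.univ.filter fun x => D a x).card := by
          rw [← hdc]
          exact Finset.sum_congr rfl fun x _ => by rw [heq x]
        exact_mod_cast hnat
      rw [hsum2]
      have hle := Finset.card_nsmul_le_sum A
        (fun a => ((Finset.univ.filter fun x => D a x).card : ℝ)) ((1/2+α)*(n:ℝ))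
        (fun a _ => (hdeg a).1)
      rw [nsmul_eq_mul] at hle
      exact hle
    exact aux_count α n hα hn' hcard (fun x => T x y) A hsub hAcard hsum
  -- Hall's condition
  set N : V → Finset V := fun x => Finset.univ.filter fun y => α^2*n ≤ ((T x y).card:ℝ) with hN
  have hall : ∀ s : Finset V, s.card ≤ (s.biUnion N).card := by
    intro s
    rcases s.eq_empty_or_nonempty with rfl | ⟨x, hx⟩
    · simp
    rcases le_or_gt ((s.card : ℝ)) ((n:ℝ)/2) with h | h
    · have h1 : (s.card : ℝ) < ((N x).card : ℝ) := lt_of_le_of_lt h (claim1 x)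
      have h2 : s.card ≤ (N x).card := le_of_lt (by exact_mod_cast h1)
      exact h2.trans (Finset.card_le_card (Finset.subset_biUnion_of_mem N hx))
    · have huniv : s.biUnion N = Finset.univ := by
        rw [Finset.eq_univ_iff_forall]
        intro y
        set M : Finset V := Finset.univ.filter fun x => α^2*n ≤ ((T x y).card:ℝ) with hM
        have h2 := claim2 y
        have hsumlt : n < s.card + M.card := by
          have : (n:ℝ) < (s.card : ℝ) + (M.card : ℝ) := by rw [hM]; linarith
          exact_mod_cast this
        have hun : (s ∪ M).card ≤ n := by
          rw [← hcard, ← Finset.card_univ]; exact Finset.card_le_card (Finset.subset_univ _)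
        have hint := Finset.card_inter_add_card_union s M
        have hpos : 0 < (s ∩ M).card := by omega
        obtain ⟨x', hx'⟩ := Finset.card_pos.mp hpos
        rw [Finset.mem_inter] at hx'
        refine Finset.mem_biUnion.mpr ⟨x', hx'.1, ?_⟩
        rw [hN, Finset.mem_filter]
        refine ⟨Finset.mem_univ _, ?_⟩
        have := hx'.2
        rw [hM, Finset.mem_filter] at this
        exact this.2
      rw [huniv, Finset.card_univ, hcard]
      calc s.card ≤ Finset.univ.card := Finset.card_le_univ s
        _ = n := by rw [Finset.card_univ, hcard]
  obtain ⟨f, hfinj, hf⟩ := (Finset.all_card_le_biUnion_card_iff_exists_injective N).mp hall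
  refine ⟨Equiv.ofBijective f (Finite.injective_iff_bijective.mp hfinj), ?_⟩
  intro x
  have hfx := hf x
  rw [hN, Finset.mem_filter] at hfx
  have := hfx.2
  rw [hT] at this
  exact this
end
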